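/- arXiv:1108.3376 — 4 statements merged into one kernel-verified Lean document; each statement's English description precedes it below -/
import Mathlib

section
/- The chain category ℤ_⊗ is freely generated as a category by the morphisms (i, ∅) : i → i − 1 and (i, I_k) : i → i − k − 1 for i ∈ ℤ and k ≥ 1. That is, every morphism of ℤ_⊗ other than an identity can be written uniquely as a composite of these generating morphisms. -/
/-- Generators of the monoid `M`: the letter `s` and letters `I n` for `n ≥ 1`. -/
inductive MGen : Type
  | s : MGen
  | I : ℕ+ → MGen

/-- The relations `I n ∘ I m = I (n + m)`. -/
def MRel : FreeMonoid MGen → FreeMonoid MGen → Prop := fun a b =>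
  ∃ n m : ℕ+, a = FreeMonoid.of (MGen.I n) * FreeMonoid.of (MGen.I m) ∧
    b = FreeMonoid.of (MGen.I (n + m))

/-- The monoid `M = Mon(s, Iₙ : n ≥ 1)/(Iₙ ∘ Iₘ = I_{n+m})`. -/
abbrev M : Type := (conGen MRel).Quotient

/-- The element `s` of `M`. -/
def Ms : M := (conGen MRel).mk' (FreeMonoid.of MGen.s)

/-- The element `Iₙ` of `M`. -/
def MI (n : ℕ+) : M := (conGen MRel).mk' (FreeMonoid.of (MGen.I n))

/-- The operation `V ⊗ W = V ∘ s ∘ W` on `M`, which is the composition of the chain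
category `ℤ_⊗`. -/
def otimes (V W : M) : M := V * Ms * W

/-!
The relations make `Iₙ = I₁ⁿ`, and every element of `M` is
`I₁^{k₀} s I₁^{k₁} s ⋯ s I₁^{k_r} = I₁^{k₀} ⊗ ⋯ ⊗ I₁^{k_r}`. The exponents are unique because
`s ↦ b`, `Iₙ ↦ aⁿ` is a well-defined map to words over `{a, b}`: the image of this product is
`a^{k₀} b a^{k₁} b ⋯ b a^{k_r}`, and cutting that word at its letters `b` recovers them. Since
`{∅} ∪ {I_k : k ≥ 1}` are exactly the powers of `I₁`, this is the unique factorisation.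
-/

lemma MI_add (n m : ℕ+) : MI (n + m) = MI n * MI m :=
  ((Con.eq _).2 (ConGen.Rel.of _ _ ⟨n, m, rfl, rfl⟩)).symm

lemma MI_eq_pow (n : ℕ+) : MI n = MI 1 ^ (n : ℕ) := by
  induction n using PNat.recOn with
  | one => rw [PNat.one_coe, pow_one]
  | succ n ih => rw [MI_add, ih, PNat.add_coe, PNat.one_coe, pow_succ]

lemma one_or_MI_iff_mem_range_pow {x : M} :
    (x = 1 ∨ ∃ n : ℕ+, x = MI n) ↔ x ∈ Set.range (MI 1 ^ · : ℕ → M) := by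
  constructor
  · rintro (rfl | ⟨n, rfl⟩)
    · exact ⟨0, pow_zero _⟩
    · exact ⟨n, (MI_eq_pow n).symm⟩
  · rintro ⟨k, rfl⟩
    rcases Nat.eq_zero_or_pos k with rfl | hk
    · exact Or.inl (pow_zero _)
    · exact Or.inr ⟨⟨k, hk⟩, (MI_eq_pow ⟨k, hk⟩).symm⟩

def otimesPowers (k : ℕ) (L : List ℕ) : M := (L.map (MI 1 ^ ·)).foldl otimes (MI 1 ^ k)

lemma foldl_otimes_mul (c a : M) (L : List M) :
    L.foldl otimes (c * a) = c * L.foldl otimes a := by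
  induction L generalizing a with
  | nil => rfl
  | cons x L ih => simp only [List.foldl_cons, otimes, mul_assoc, ← ih]

lemma pow_mul_otimesPowers (j k : ℕ) (L : List ℕ) :
    MI 1 ^ j * otimesPowers k L = otimesPowers (j + k) L := by
  rw [otimesPowers, otimesPowers, pow_add, foldl_otimes_mul]

lemma otimesPowers_cons (k l : ℕ) (L : List ℕ) :
    otimesPowers k (l :: L) = MI 1 ^ k * Ms * otimesPowers l L := by
  rw [otimesPowers, otimesPowers, List.map_cons, List.foldl_cons, otimes, foldl_otimes_mul]

lemma exists_otimesPowers_eq (V : M) : ∃ k L, otimesPowers k L = V := by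
  induction V using Con.induction_on with | _ w
  induction w using FreeMonoid.inductionOn' with
  | one => exact ⟨0, [], pow_zero _⟩
  | of_mul g w ih =>
    obtain ⟨k, L, hkL⟩ := ih
    rw [Con.coe_mul, ← hkL]
    cases g with
    | s => exact ⟨0, k :: L, by rw [otimesPowers_cons, pow_zero, one_mul]; rfl⟩
    | I n => exact ⟨n + k, L, by rw [← pow_mul_otimesPowers, ← MI_eq_pow]; rfl⟩

/-- The letter `b` is `true` and `a` is `false`. -/
def letterWord : MGen → FreeMonoid Bool
  | MGen.s => FreeMonoid.of true
  | MGen.I n => FreeMonoid.ofList (List.replicate n false)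

def toWord : M →* FreeMonoid Bool :=
  (conGen MRel).lift (FreeMonoid.lift letterWord) <| Con.conGen_le.2 <| by
    rintro _ _ ⟨n, m, rfl, rfl⟩
    rw [Con.ker_rel, map_mul]
    simp only [FreeMonoid.lift_eval_of, letterWord, ← FreeMonoid.ofList_append,
      ← List.replicate_add, PNat.add_coe]

lemma toList_toWord_MI_one_pow (k : ℕ) :
    (toWord (MI 1 ^ k)).toList = List.replicate k false := by
  induction k with
  | zero => rfl
  | succ k ih =>
    rw [pow_succ, map_mul, FreeMonoid.toList_mul, ih, List.replicate_succ']
    rfl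

lemma toList_toWord_otimesPowers (k : ℕ) (L : List ℕ) :
    (toWord (otimesPowers k L)).toList =
      [true].intercalate ((k :: L).map (List.replicate · false)) := by
  induction L generalizing k with
  | nil =>
    rw [List.map_singleton, List.intercalate_singleton, otimesPowers]
    exact toList_toWord_MI_one_pow k
  | cons l L ih =>
    rw [otimesPowers_cons, map_mul toWord, map_mul toWord, FreeMonoid.toList_mul,
      FreeMonoid.toList_mul, toList_toWord_MI_one_pow, ih]
    simp only [List.map_cons, List.intercalate_cons_cons]
    rfl

lemma otimesPowers_injective2 : Function.Injective2 otimesPowers := by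
  intro k k' L L' h
  have hblocks := congrArg (List.splitOn true) <| by
    simpa only [toList_toWord_otimesPowers] using congrArg (fun V => (toWord V).toList) h
  have hfree : ∀ L : List ℕ, ∀ l ∈ L.map (List.replicate · false), true ∉ l := by
    simp [List.mem_replicate]
  rw [List.splitOn_intercalate _ (hfree _) (by simp),
    List.splitOn_intercalate _ (hfree _) (by simp)] at hblocks
  exact List.cons.inj (List.map_injective_iff.2 (List.replicate_left_injective false) hblocks)

/-- the chain category `ℤ_⊗` is freely generated by the morphisms
`(i, ∅)` and `(i, I_k)`.  Since a morphism with source `i` is determined by its label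
`V ∈ M` and composition is given by `⊗`, this says: every `V ∈ M` can be written
uniquely as an iterated `⊗`-product of a nonempty list of generators taken from
`{∅} ∪ {I_k : k ≥ 1}` (a nonempty list is recorded as a head together with a tail). -/
theorem stmt5 : ∀ V : M, ∃! p : M × List M,
    (p.1 = 1 ∨ ∃ n : ℕ+, p.1 = MI n) ∧
    (∀ x ∈ p.2, x = 1 ∨ ∃ n : ℕ+, x = MI n) ∧
    p.2.foldl otimes p.1 = V := by
  intro V
  obtain ⟨k, L, rfl⟩ := exists_otimesPowers_eq V
  simp only [one_or_MI_iff_mem_range_pow]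
  refine ⟨(MI 1 ^ k, L.map (MI 1 ^ ·)), ⟨⟨k, rfl⟩, ?_, rfl⟩, ?_⟩
  · simp
  rintro ⟨_, xs⟩ ⟨⟨j, rfl⟩, hxs, h⟩
  obtain ⟨J, rfl⟩ : xs ∈ Set.range (List.map (MI 1 ^ · : ℕ → M)) := by
    rwa [Set.range_list_map]
  obtain ⟨rfl, rfl⟩ := otimesPowers_injective2 h
  rfl
end

section
/- Let 𝒜 be a preadditive category and 𝔞 a full subcategory such that: (1) the coproduct of any family of objects of 𝔞 exists in 𝒜 and lies in 𝔞, and (2) there is a small subcategory 𝔤 of 𝔞 such that every object of 𝔞 is a retract of a coproduct of a family of objects from 𝔤. Then every object X of 𝒜 admits an 𝔞-resolution, i.e., a diagram ⋯ → A₁ → A₀ → A₋₁ = X in 𝒜 with all A_i ∈ 𝔞 for i ≥ 0, such that for every object B of 𝔞 the induced sequence of abelian groups Hom(B, A_•) is exact and Hom(B, δ₀) : Hom(B, A₀) → Hom(B, X) is surjective. -/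
open CategoryTheory Limits

universe u v

/-- `c` is a coproduct of the family `f`. -/
def IsCoproductOf {C : Type u} [Category.{v} C] {ι : Type v} (c : C) (f : ι → C) : Prop :=
  ∃ inj : ∀ i, f i ⟶ c, Nonempty (IsColimit (Cofan.mk c inj))

lemma step_ex {C : Type u} [Category.{v} C] [Preadditive C] (P : Set C)
    (h1 : ∀ {ι : Type v} (f : ι → C), (∀ i, f i ∈ P) → ∃ c ∈ P, IsCoproductOf c f)
    (G : Set C) [Small.{v} G] (hGP : G ⊆ P)
    (hret : ∀ a ∈ P, ∃ (ι : Type v) (f : ι → C) (c : C),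
      (∀ i, f i ∈ G) ∧ IsCoproductOf c f ∧ ∃ (s : a ⟶ c) (r : c ⟶ a), s ≫ r = 𝟙 a)
    (Y Z : C) (w : Y ⟶ Z) :
    ∃ (A : C) (δ : A ⟶ Y), A ∈ P ∧ δ ≫ w = 0 ∧
      ∀ B ∈ P, ∀ g : B ⟶ Y, g ≫ w = 0 → ∃ h : B ⟶ A, h ≫ δ = g := by
  classical
  set obj : Shrink.{v} ↥G → C := fun j => ((equivShrink ↥G).symm j : C) with hobj
  have hobjG : ∀ j, obj j ∈ G := fun j => ((equivShrink ↥G).symm j).2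
  set ι : Type v := Σ j : Shrink.{v} ↥G, {φ : obj j ⟶ Y // φ ≫ w = 0} with hι
  set f : ι → C := fun i => obj i.1 with hf
  obtain ⟨A, hA, inj, ⟨hc⟩⟩ := h1 f (fun i => hGP (hobjG i.1))
  set δ : A ⟶ Y := hc.desc (Cofan.mk Y (fun i => (i.2 : obj i.1 ⟶ Y))) with hδ
  have hfac : ∀ i : ι, inj i ≫ δ = i.2.1 := fun i => hc.fac _ ⟨i⟩
  refine ⟨A, δ, hA, ?_, ?_⟩
  · apply hc.hom_ext
    rintro ⟨i⟩
    simp [hfac i, reassoc_of% (hfac i), i.2.2]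
  · intro B hB g hg
    obtain ⟨κ, f', c', hf'G, ⟨inj', ⟨hc'⟩⟩, s, r, hsr⟩ := hret B hB
    have e : ∀ k : κ, obj (equivShrink ↥G ⟨f' k, hf'G k⟩) = f' k := fun k =>
      congrArg Subtype.val (Equiv.symm_apply_apply _ _)
    set leg : ∀ k : κ, f' k ⟶ A := fun k =>
      eqToHom (e k).symm ≫ inj ⟨equivShrink ↥G ⟨f' k, hf'G k⟩,
        ⟨eqToHom (e k) ≫ inj' k ≫ r ≫ g, by
          simp only [Category.assoc, hg, comp_zero]⟩⟩ with hleg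
    set t : c' ⟶ A := hc'.desc (Cofan.mk A leg) with ht
    have hfac' : ∀ k : κ, inj' k ≫ t = leg k := fun k => hc'.fac _ ⟨k⟩
    have htδ : t ≫ δ = r ≫ g := by
      apply hc'.hom_ext
      rintro ⟨k⟩
      have := hfac ⟨equivShrink ↥G ⟨f' k, hf'G k⟩,
        ⟨eqToHom (e k) ≫ inj' k ≫ r ≫ g, by
          simp only [Category.assoc, hg, comp_zero]⟩⟩
      simp only [Cofan.mk_ι_app, Category.assoc] at this ⊢
      rw [reassoc_of% (hfac' k), hleg]
      simp [this]
    exact ⟨s ≫ t, by rw [Category.assoc, htδ, ← Category.assoc, hsr, Category.id_comp]⟩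

/-- in a preadditive category `C` with full subcategory `𝔞` (given by the
set of objects `P`) such that (1) coproducts of families of objects of `𝔞` exist and lie
in `𝔞` and (2) there is a small subcategory `𝔤 ⊆ 𝔞` such that every object of `𝔞` is a
retract of a coproduct of objects of `𝔤`, every object `X` admits an `𝔞`-resolution. -/
theorem stmt7 {C : Type u} [Category.{v} C] [Preadditive C] (P : Set C)
    (h1 : ∀ {ι : Type v} (f : ι → C), (∀ i, f i ∈ P) → ∃ c ∈ P, IsCoproductOf c f)
    (h2 : ∃ G : Set C, Small.{v} G ∧ G ⊆ P ∧ ∀ a ∈ P, ∃ (ι : Type v) (f : ι → C) (c : C),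
      (∀ i, f i ∈ G) ∧ IsCoproductOf c f ∧ ∃ (s : a ⟶ c) (r : c ⟶ a), s ≫ r = 𝟙 a)
    (X : C) :
    ∃ (A : ℕ → C) (d : ∀ i, A (i + 1) ⟶ A i) (ε : A 0 ⟶ X),
      (∀ i, A i ∈ P) ∧ (d 0 ≫ ε = 0) ∧ (∀ i, d (i + 1) ≫ d i = 0) ∧
      ∀ B ∈ P,
        (Function.Surjective (fun g : B ⟶ A 0 => g ≫ ε)) ∧
        (∀ g : B ⟶ A 0, g ≫ ε = 0 → ∃ h : B ⟶ A 1, h ≫ d 0 = g) ∧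
        (∀ (i : ℕ) (g : B ⟶ A (i + 1)), g ≫ d i = 0 →
          ∃ h : B ⟶ A (i + 2), h ≫ d (i + 1) = g) := by
  obtain ⟨G, hGsmall, hGP, hret⟩ := h2
  haveI : Small.{v} ↥G := hGsmall
  choose fA fδ hmem hcomp hfactor using step_ex P h1 G hGP hret
  -- T n = (Y_n, Z_n, w_n); A n := fA of that data
  let T : ℕ → Σ' (Y Z : C), Y ⟶ Z := fun n => Nat.rec
    ⟨X, X, 0⟩
    (fun _ ih => ⟨fA ih.1 ih.2.1 ih.2.2, ih.1, fδ ih.1 ih.2.1 ih.2.2⟩) n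
  let A : ℕ → C := fun n => fA (T n).1 (T n).2.1 (T n).2.2
  let d : ∀ i, A (i + 1) ⟶ A i := fun i => fδ (T (i + 1)).1 (T (i + 1)).2.1 (T (i + 1)).2.2
  let ε : A 0 ⟶ X := fδ (T 0).1 (T 0).2.1 (T 0).2.2
  refine ⟨A, d, ε, fun i => hmem _ _ _, ?_, fun i => ?_, fun B hB => ⟨?_, ?_, ?_⟩⟩
  · exact hcomp (T 1).1 (T 1).2.1 (T 1).2.2
  · exact hcomp (T (i + 2)).1 (T (i + 2)).2.1 (T (i + 2)).2.2
  · intro g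
    obtain ⟨h, hh⟩ := hfactor (T 0).1 (T 0).2.1 (T 0).2.2 B hB g (comp_zero)
    exact ⟨h, hh⟩
  · intro g hg
    exact hfactor (T 1).1 (T 1).2.1 (T 1).2.2 B hB g hg
  · intro i g hg
    exact hfactor (T (i + 2)).1 (T (i + 2)).2.1 (T (i + 2)).2.2 B hB g hg
end

section
/- Let 𝒜 be a preadditive category and 𝔞 a full subcategory such that: (1) the product of any family of objects of 𝔞 exists in 𝒜 and lies in 𝔞, and (2) there is a small subcategory 𝔤 of 𝔞 such that every object of 𝔞 is a retract of a product of a family of objects from 𝔤. Then every object Y of 𝒜 admits an 𝔞-coresolution, i.e., a diagram A₁ → A₀ → A₋₁ → ⋯ in 𝒜 with A₁ = Y and A_i ∈ 𝔞 for i ≤ 0, such that for every object B of 𝔞 the induced sequence Hom(A^•, B) of abelian groups is exact, with Hom(δ₁, B) surjective. -/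
open CategoryTheory Limits

universe u v

/-- `c` is a product of the family `f`. -/
def IsProductOf {C : Type u} [Category.{v} C] {ι : Type v} (c : C) (f : ι → C) : Prop :=
  ∃ proj : ∀ i, c ⟶ f i, Nonempty (IsLimit (Fan.mk c proj))

/-- in a preadditive category `C` with full subcategory `𝔞` (given by the
set of objects `P`) such that (1) products of families of objects of `𝔞` exist and lie
in `𝔞` and (2) there is a small subcategory `𝔤 ⊆ 𝔞` such that every object of `𝔞` is a
retract of a product of objects of `𝔤`, every object `Y` admits an `𝔞`-coresolution
`Y = A₁ → A₀ → A₋₁ → ⋯` (reindexed here as `A 0 = Y` with maps `d i : A i ⟶ A (i+1)`). -/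
theorem stmt8 {C : Type u} [Category.{v} C] [Preadditive C] (P : Set C)
    (h1 : ∀ {ι : Type v} (f : ι → C), (∀ i, f i ∈ P) → ∃ c ∈ P, IsProductOf c f)
    (h2 : ∃ G : Set C, Small.{v} G ∧ G ⊆ P ∧ ∀ a ∈ P, ∃ (ι : Type v) (f : ι → C) (c : C),
      (∀ i, f i ∈ G) ∧ IsProductOf c f ∧ ∃ (s : a ⟶ c) (r : c ⟶ a), s ≫ r = 𝟙 a)
    (Y : C) :
    ∃ (A : ℕ → C) (d : ∀ i, A i ⟶ A (i + 1)),
      A 0 = Y ∧ (∀ i, A (i + 1) ∈ P) ∧ (∀ i, d i ≫ d (i + 1) = 0) ∧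
      ∀ B ∈ P,
        (Function.Surjective (fun g : A 1 ⟶ B => d 0 ≫ g)) ∧
        (∀ (i : ℕ) (g : A (i + 1) ⟶ B), d i ≫ g = 0 →
          ∃ h : A (i + 2) ⟶ B, d (i + 1) ≫ h = g) := by
  obtain ⟨G, hGsm, hGP, hGret⟩ := h2
  haveI : Small.{v} ↥G := hGsm
  -- the key step
  have step : ∀ (W X : C) (e : W ⟶ X), ∃ c, c ∈ P ∧ ∃ δ : X ⟶ c, e ≫ δ = 0 ∧
      ∀ B ∈ P, ∀ g : X ⟶ B, e ≫ g = 0 → ∃ h : c ⟶ B, δ ≫ h = g := by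
    intro W X e
    set κ := (a : Shrink.{v} ↥G) ×
      { φ : X ⟶ (((equivShrink ↥G).symm a : ↥G) : C) // e ≫ φ = 0 } with hκ
    set f : κ → C := fun i => (((equivShrink ↥G).symm i.1 : ↥G) : C) with hf
    obtain ⟨c, hcP, proj, ⟨L⟩⟩ := h1 f (fun i => hGP ((equivShrink ↥G).symm i.1).2)
    set δ : X ⟶ c := L.lift (Fan.mk X (fun i => i.2.1)) with hδ
    have hfacδ : ∀ i : κ, δ ≫ proj i = i.2.1 := by
      intro i
      simpa using L.fac (Fan.mk X (fun i => i.2.1)) ⟨i⟩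
    refine ⟨c, hcP, δ, ?_, ?_⟩
    · apply L.hom_ext
      rintro ⟨i⟩
      simp only [Fan.mk_π_app]
      rw [Category.assoc, hfacδ, i.2.2, zero_comp]
    · intro B hB g hg
      obtain ⟨ι', f', cB, hf'G, ⟨projB, ⟨LB⟩⟩, s, r, hsr⟩ := hGret B hB
      -- index for each j : ι'
      set a : ι' → Shrink.{v} ↥G := fun j => equivShrink ↥G ⟨f' j, hf'G j⟩ with ha
      have ε : ∀ j, (((equivShrink ↥G).symm (a j) : ↥G) : C) = f' j := fun j =>
        congrArg Subtype.val ((equivShrink ↥G).symm_apply_apply ⟨f' j, hf'G j⟩)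
      set φ : ∀ j : ι', X ⟶ (((equivShrink ↥G).symm (a j) : ↥G) : C) :=
        fun j => (g ≫ s ≫ projB j) ≫ eqToHom (ε j).symm with hφ
      have hφ0 : ∀ j, e ≫ φ j = 0 := by
        intro j
        simp only [hφ]
        rw [← Category.assoc, ← Category.assoc, ← Category.assoc, hg]
        simp
      set h₀ : c ⟶ cB := LB.lift (Fan.mk c fun j => proj ⟨a j, φ j, hφ0 j⟩ ≫ eqToHom (ε j))
        with hh₀
      have key : δ ≫ h₀ = g ≫ s := by
        apply LB.hom_ext
        rintro ⟨j⟩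
        have := LB.fac (Fan.mk c fun j => proj ⟨a j, φ j, hφ0 j⟩ ≫ eqToHom (ε j)) ⟨j⟩
        simp only [Fan.mk_π_app] at this ⊢
        rw [Category.assoc, hh₀, this, ← Category.assoc, hfacδ]
        simp [hφ]
      exact ⟨h₀ ≫ r, by rw [← Category.assoc, key]; simp [Category.assoc, hsr]⟩
  choose c hcP δ hδ0 hfac using step
  set S : ℕ → Σ' (W X : C), W ⟶ X := fun n =>
    Nat.rec ⟨Y, Y, 0⟩ (fun _ p => ⟨p.2.1, c p.1 p.2.1 p.2.2, δ p.1 p.2.1 p.2.2⟩) n with hS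
  refine ⟨fun n => (S n).2.1, fun n => (S (n+1)).2.2, rfl, fun i => hcP _ _ _,
    fun i => hδ0 _ _ _, fun B hB => ⟨?_, fun i g hg => hfac _ _ _ B hB g hg⟩⟩
  · intro ψ
    obtain ⟨h, hh⟩ := hfac Y Y 0 B hB ψ (zero_comp)
    exact ⟨h, hh⟩
end

section
/- Let 𝒞 be a category enriched in groupoids (a track category) with zero morphisms, which is abelian (all automorphism groups Aut_𝒞(f) are abelian). For objects X, Y define D(X,Y) = Aut_𝒞(o_{X,Y}). Then D is a bifunctor 𝒜^op × 𝒜 → Ab on the homotopy category 𝒜 = π₀𝒞: for morphisms represented by f : X′ → X and g : Y → Y′ in 𝒞₀, the induced maps on D(X, Y) given by horizontal composition with f and g are group homomorphisms depending only on the homotopy classes of f and g, and are functorial. -/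
open CategoryTheory CategoryTheory.Bicategory

universe w v u

variable {C : Type u} [Bicategory.{w, v} C]

/-- In a track category with zero morphisms `o` (modelled as a strict bicategory whose
2-morphisms are the tracks), the map `D(X,Y) → D(X',Y)` induced by precomposition with
`f : X' ⟶ X`, where `D(X,Y) = Aut(o_{X,Y})` is the group of self-tracks of the zero
morphism. -/
def indPre (o : ∀ X Y : C, X ⟶ Y)
    (hz1 : ∀ {X Y Z : C} (f : X ⟶ Y), f ≫ o Y Z = o X Z)
    {X' X Y : C} (f : X' ⟶ X) (α : o X Y ⟶ o X Y) : o X' Y ⟶ o X' Y :=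
  eqToHom (hz1 f).symm ≫ Bicategory.whiskerLeft f α ≫ eqToHom (hz1 f)

/-- The map `D(X,Y) → D(X,Y')` induced by postcomposition with `g : Y ⟶ Y'`. -/
def indPost (o : ∀ X Y : C, X ⟶ Y)
    (hz2 : ∀ {X Y Z : C} (g : Y ⟶ Z), o X Y ≫ g = o X Z)
    {X Y Y' : C} (g : Y ⟶ Y') (α : o X Y ⟶ o X Y) : o X Y' ⟶ o X Y' :=
  eqToHom (hz2 g).symm ≫ Bicategory.whiskerRight α g ≫ eqToHom (hz2 g)

/-- let `𝒞` be an abelian track category with zero morphisms (a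
groupoid-enriched category, modelled as a strict bicategory with all 2-morphisms
invertible and all automorphism groups of 1-morphisms abelian, with zero 1-morphisms
`o`).  Then `D(X,Y) = Aut(o_{X,Y})` is a bifunctor `𝒜ᵒᵖ × 𝒜 → Ab` on `𝒜 = π₀𝒞`:
the maps induced by `f : X' ⟶ X` and `g : Y ⟶ Y'` are group homomorphisms, they
depend only on the homotopy classes of `f` and `g`, and they are functorial in each
variable and commute with each other. -/
theorem stmt16 [Bicategory.Strict C]
    (o : ∀ X Y : C, X ⟶ Y)
    (hz1 : ∀ {X Y Z : C} (f : X ⟶ Y), f ≫ o Y Z = o X Z)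
    (hz2 : ∀ {X Y Z : C} (g : Y ⟶ Z), o X Y ≫ g = o X Z)
    (hgrpd : ∀ {a b : C} {f g : a ⟶ b} (α : f ⟶ g), IsIso α)
    (hab : ∀ {a b : C} (f : a ⟶ b) (α β : f ⟶ f), α ≫ β = β ≫ α) :
    -- group homomorphisms
    (∀ {X' X Y : C} (f : X' ⟶ X) (α β : o X Y ⟶ o X Y),
      indPre o @hz1 f (α ≫ β) = indPre o @hz1 f α ≫ indPre o @hz1 f β ∧
      indPre o @hz1 f (𝟙 (o X Y)) = 𝟙 (o X' Y)) ∧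
    (∀ {X Y Y' : C} (g : Y ⟶ Y') (α β : o X Y ⟶ o X Y),
      indPost o @hz2 g (α ≫ β) = indPost o @hz2 g α ≫ indPost o @hz2 g β ∧
      indPost o @hz2 g (𝟙 (o X Y)) = 𝟙 (o X Y')) ∧
    -- dependence only on the homotopy class
    (∀ {X' X Y : C} (f f' : X' ⟶ X), Nonempty (f ⟶ f') →
      ∀ α : o X Y ⟶ o X Y, indPre o @hz1 f α = indPre o @hz1 f' α) ∧
    (∀ {X Y Y' : C} (g g' : Y ⟶ Y'), Nonempty (g ⟶ g') →
      ∀ α : o X Y ⟶ o X Y, indPost o @hz2 g α = indPost o @hz2 g' α) ∧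
    -- functoriality
    (∀ {X Y : C} (α : o X Y ⟶ o X Y), indPre o @hz1 (𝟙 X) α = α) ∧
    (∀ {X Y : C} (α : o X Y ⟶ o X Y), indPost o @hz2 (𝟙 Y) α = α) ∧
    (∀ {X'' X' X Y : C} (e : X'' ⟶ X') (f : X' ⟶ X) (α : o X Y ⟶ o X Y),
      indPre o @hz1 (e ≫ f) α = indPre o @hz1 e (indPre o @hz1 f α)) ∧
    (∀ {X Y Y' Y'' : C} (g : Y ⟶ Y') (h : Y' ⟶ Y'') (α : o X Y ⟶ o X Y),
      indPost o @hz2 (g ≫ h) α = indPost o @hz2 h (indPost o @hz2 g α)) ∧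
    -- bifunctoriality: the two induced maps commute
    (∀ {X' X Y Y' : C} (f : X' ⟶ X) (g : Y ⟶ Y') (α : o X Y ⟶ o X Y),
      indPre o @hz1 f (indPost o @hz2 g α) = indPost o @hz2 g (indPre o @hz1 f α)) := by
  refine ⟨?_, ?_, ?_, ?_, ?_, ?_, ?_, ?_, ?_⟩
  · intro X' X Y f α β
    constructor <;> simp [indPre]
  · intro X Y Y' g α β
    constructor <;> simp [indPost]
  · rintro X' X Y f f' ⟨F⟩ α
    have h := whisker_exchange F α
    -- h : f ◁ α ≫ F ▷ o X Y = F ▷ o X Y ≫ f' ◁ α  (check direction)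
    have γ : o X' Y ⟶ o X' Y := eqToHom (hz1 f).symm ≫ F ▷ o X Y ≫ eqToHom (hz1 f')
    set γ := (eqToHom (hz1 f).symm ≫ F ▷ o X Y ≫ eqToHom (hz1 f') : o X' Y ⟶ o X' Y) with hγ
    haveI : IsIso γ := hgrpd γ
    have key : indPre o @hz1 f α ≫ γ = γ ≫ indPre o @hz1 f' α := by
      simp only [indPre, hγ, Category.assoc, eqToHom_trans, eqToHom_refl, Category.id_comp,
        eqToHom_trans_assoc]
      slice_lhs 2 3 => rw [whisker_exchange]
      simp
    have := hab _ (indPre o @hz1 f α) γ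
    rw [this] at key
    exact (cancel_epi γ).mp key
  · rintro X Y Y' g g' ⟨G⟩ α
    set γ := (eqToHom (hz2 g).symm ≫ o X Y ◁ G ≫ eqToHom (hz2 g') : o X Y' ⟶ o X Y') with hγ
    haveI : IsIso γ := hgrpd γ
    have key : indPost o @hz2 g α ≫ γ = γ ≫ indPost o @hz2 g' α := by
      simp only [indPost, hγ, Category.assoc, eqToHom_trans, eqToHom_refl, Category.id_comp,
        eqToHom_trans_assoc]
      slice_rhs 2 3 => rw [whisker_exchange]
      simp
    have := hab _ (indPost o @hz2 g α) γ
    rw [this] at key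
    exact (cancel_epi γ).mp key
  · intro X Y α
    simp [indPre, Strict.leftUnitor_eqToIso]
  · intro X Y α
    simp [indPost, Strict.rightUnitor_eqToIso]
  · intro X'' X' X Y e f α
    simp [indPre, Bicategory.whiskerLeft_eqToHom, Strict.associator_eqToIso]
  · intro X Y Y' Y'' g h α
    simp [indPost, Bicategory.eqToHom_whiskerRight, Strict.associator_eqToIso]
  · intro X' X Y Y' f g α
    simp [indPre, indPost, Bicategory.whiskerLeft_eqToHom, Bicategory.eqToHom_whiskerRight,
      Strict.associator_eqToIso]
end
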